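/- Let H ⊴ G be a normal subgroup with finite transversal Y, X a generating set of H, and suppose for every automorphism α of H given by conjugation by an element y ∈ Y, the generating sets X and α(X) are equivalent, i.e., there is a single constant A such that ℓ_X(y⁻¹ x y) ≤ A for all x ∈ X ∪ X⁻¹ and y ∈ Y ∪ Y⁻¹. Then d_X(h, h') ≥ d_{X∪Y}(h, h') for all h, h' ∈ H, and d_X restricted to H is bi-Lipschitz equivalent to d_{X∪Y} restricted to H. -/
import Mathlib


/-- Word length of `g` with respect to a subset `X` of a group. -/
noncomputable def wordLength {G : Type*} [Group G] (X : Set G) (g : G) : ℕ :=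
  sInf {n | ∃ l : List G, l.length = n ∧ (∀ x ∈ l, x ∈ X ∨ x⁻¹ ∈ X) ∧ l.prod = g}

/-- Word metric associated to a subset `X`. -/
noncomputable def wordDist {G : Type*} [Group G] (X : Set G) (g h : G) : ℕ :=
  wordLength X (g⁻¹ * h)

section Aux

variable {G : Type*} [Group G] {X : Set G}

lemma exists_word {g : G} (hg : g ∈ Subgroup.closure X) :
    ∃ l : List G, (∀ x ∈ l, x ∈ X ∨ x⁻¹ ∈ X) ∧ l.prod = g := by
  have hg' : g ∈ Submonoid.closure (X ∪ X⁻¹) := by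
    rw [← Subgroup.closure_toSubmonoid]; exact hg
  obtain ⟨l, h1, h2⟩ := Submonoid.exists_list_of_mem_closure hg'
  refine ⟨l, fun x hx => ?_, h2⟩
  rcases h1 x hx with h | h
  · exact Or.inl h
  · exact Or.inr (Set.mem_inv.mp h)

lemma wordLength_le_of_word (l : List G) (hl : ∀ x ∈ l, x ∈ X ∨ x⁻¹ ∈ X) :
    wordLength X l.prod ≤ l.length :=
  Nat.sInf_le ⟨l, rfl, hl, rfl⟩

lemma exists_min_word {g : G} (hg : g ∈ Subgroup.closure X) :
    ∃ l : List G, l.length = wordLength X g ∧ (∀ x ∈ l, x ∈ X ∨ x⁻¹ ∈ X) ∧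
      l.prod = g := by
  obtain ⟨l, hl, hprod⟩ := exists_word hg
  have hne : {n | ∃ l : List G, l.length = n ∧ (∀ x ∈ l, x ∈ X ∨ x⁻¹ ∈ X) ∧
      l.prod = g}.Nonempty := ⟨l.length, l, rfl, hl, hprod⟩
  obtain ⟨l', h1, h2, h3⟩ := Nat.sInf_mem hne
  exact ⟨l', h1, h2, h3⟩

lemma wordLength_mul_le {a b : G} (ha : a ∈ Subgroup.closure X)
    (hb : b ∈ Subgroup.closure X) :
    wordLength X (a * b) ≤ wordLength X a + wordLength X b := by
  obtain ⟨la, hla, hlaX, hlaprod⟩ := exists_min_word ha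
  obtain ⟨lb, hlb, hlbX, hlbprod⟩ := exists_min_word hb
  have := wordLength_le_of_word (X := X) (la ++ lb) (by
    intro x hx
    rcases List.mem_append.mp hx with h | h
    · exact hlaX x h
    · exact hlbX x h)
  simpa [hlaprod, hlbprod, hla, hlb] using this

end Aux

/-- If `H ⊴ G` has a finite transversal `Y` with `1 ∈ Y`, `X` generates `H`, and
conjugation by elements of `Y ∪ Y⁻¹` distorts `X`-letters by at most `A`, then on `H`
the metric `d_X` dominates `d_{X∪Y}` and the two metrics are bi-Lipschitz equivalent. -/
theorem metrics_biLipschitz_on_subgroup {G : Type*} [Group G] (H : Subgroup G)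
    [H.Normal] (hfin : H.FiniteIndex)
    (X Y : Set G) (hXH : X ⊆ (H : Set G)) (hXgen : Subgroup.closure X = H)
    (hYfin : Y.Finite) (hYtrans : ∀ g : G, ∃! y, y ∈ Y ∧ g * y ∈ H) (h1Y : (1 : G) ∈ Y)
    (A : ℕ) (hA : ∀ x ∈ X ∪ X⁻¹, ∀ y ∈ Y ∪ Y⁻¹, wordLength X (y⁻¹ * x * y) ≤ A) :
    (∀ h ∈ H, ∀ h' ∈ H, wordDist (X ∪ Y) h h' ≤ wordDist X h h') ∧
      ∃ C : ℕ, 1 ≤ C ∧ ∀ h ∈ H, ∀ h' ∈ H,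
        wordDist X h h' ≤ C * wordDist (X ∪ Y) h h' := by
  constructor
  · -- d_{X∪Y} ≤ d_X on H
    intro h hh h' hh'
    have hg : h⁻¹ * h' ∈ Subgroup.closure X := by
      rw [hXgen]; exact mul_mem (inv_mem hh) hh'
    obtain ⟨l, hlen, hlX, hlprod⟩ := exists_min_word hg
    have : wordLength (X ∪ Y) (h⁻¹ * h') ≤ l.length := by
      refine hlprod ▸ wordLength_le_of_word l fun x hx => ?_
      rcases hlX x hx with h | h
      · exact Or.inl (Or.inl h)
      · exact Or.inr (Or.inl h)
    calc wordDist (X ∪ Y) h h' ≤ l.length := this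
      _ = wordDist X h h' := hlen
  · -- bi-Lipschitz bound
    -- the finite set of "coset rewriting" elements
    set S : Set G := (fun p : G × G × G => p.1⁻¹ * p.2.1 * p.2.2) ''
      (Y ×ˢ ((Y ∪ Y⁻¹) ×ˢ Y)) with hS
    have hSfin : S.Finite :=
      ((hYfin.prod ((hYfin.union hYfin.inv).prod hYfin)).image _)
    set B : ℕ := hSfin.toFinset.sup (wordLength X) with hBdef
    have hB : ∀ a ∈ Y, ∀ b ∈ Y ∪ Y⁻¹, ∀ c ∈ Y, wordLength X (a⁻¹ * b * c) ≤ B := by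
      intro a ha b hb c hc
      refine Finset.le_sup (f := wordLength X) ?_
      rw [Set.Finite.mem_toFinset]
      exact ⟨(a, b, c), ⟨ha, hb, hc⟩, rfl⟩
    set C : ℕ := max (max A B) 1 with hCdef
    have hAC : A ≤ C := le_trans (le_max_left _ _) (le_max_left _ _)
    have hBC : B ≤ C := le_trans (le_max_right _ _) (le_max_left _ _)
    refine ⟨C, le_max_right _ _, ?_⟩
    -- key rewriting claim
    have key : ∀ l : List G, (∀ z ∈ l, z ∈ X ∪ Y ∨ z⁻¹ ∈ X ∪ Y) →
        ∃ y ∈ Y, l.prod * y ∈ H ∧ wordLength X (l.prod * y) ≤ C * l.length := by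
      intro l
      induction l using List.reverseRecOn with
      | nil =>
        intro _
        refine ⟨1, h1Y, by simpa using H.one_mem, ?_⟩
        have : wordLength X ((1 : G)) ≤ 0 := by
          simpa using wordLength_le_of_word (X := X) [] (by simp)
        simpa using this
      | append_singleton l z ih =>
        intro hlz
        obtain ⟨y, hyY, hyH, hylen⟩ := ih fun z hz => hlz z (by simp [hz])
        obtain ⟨y', ⟨hy'Y, hy'H⟩, _⟩ := hYtrans (y⁻¹ * z)
        have hconj : y⁻¹ * z * y' ∈ H := by
          simpa [mul_assoc] using hy'H
        have hconjC : wordLength X (y⁻¹ * z * y') ≤ C := by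
          rcases hlz z (by simp) with hzX | hzX
          · rcases hzX with hzX | hzY
            · -- z is an X-letter (or inverse): then y' = y by uniqueness
              have hzH : z ∈ H := hXH hzX
              have hy'eq : y' = y := by
                obtain ⟨w, _, hw⟩ := hYtrans (y⁻¹ * z)
                have h1 : y' = w := hw y' ⟨hy'Y, hy'H⟩
                have h2 : y = w := hw y ⟨hyY, by
                  have := Subgroup.Normal.conj_mem ‹H.Normal› z hzH y⁻¹
                  simpa [mul_assoc] using this⟩
                rw [h1, h2]
              rw [hy'eq]
              exact le_trans (hA z (Or.inl hzX) y (Or.inl hyY)) hAC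
            · -- z is a Y-letter
              exact le_trans (hB y hyY z (Or.inl hzY) y' hy'Y) hBC
          · rcases hzX with hzX | hzY
            · -- z⁻¹ ∈ X
              have hzH : z ∈ H := by
                have : z⁻¹ ∈ H := hXH hzX
                simpa using inv_mem this
              have hy'eq : y' = y := by
                obtain ⟨w, _, hw⟩ := hYtrans (y⁻¹ * z)
                have h1 : y' = w := hw y' ⟨hy'Y, hy'H⟩
                have h2 : y = w := hw y ⟨hyY, by
                  have := Subgroup.Normal.conj_mem ‹H.Normal› z hzH y⁻¹
                  simpa [mul_assoc] using this⟩
                rw [h1, h2]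
              rw [hy'eq]
              exact le_trans (hA z (Or.inr (by simpa using hzX)) y (Or.inl hyY)) hAC
            · -- z⁻¹ ∈ Y
              exact le_trans
                (hB y hyY z (Or.inr (by simpa using hzY)) y' hy'Y) hBC
        refine ⟨y', hy'Y, ?_, ?_⟩
        · have : (l.prod * y) * (y⁻¹ * z * y') ∈ H := mul_mem hyH hconj
          simpa [mul_assoc] using this
        · have heq : (l ++ [z]).prod * y' = (l.prod * y) * (y⁻¹ * z * y') := by
            simp [mul_assoc]
          rw [heq]
          have hmem1 : l.prod * y ∈ Subgroup.closure X := by rw [hXgen]; exact hyH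
          have hmem2 : y⁻¹ * z * y' ∈ Subgroup.closure X := by rw [hXgen]; exact hconj
          calc wordLength X ((l.prod * y) * (y⁻¹ * z * y'))
              ≤ wordLength X (l.prod * y) + wordLength X (y⁻¹ * z * y') :=
                wordLength_mul_le hmem1 hmem2
            _ ≤ C * l.length + C := Nat.add_le_add hylen hconjC
            _ = C * (l ++ [z]).length := by simp [Nat.mul_succ]
    intro h hh h' hh'
    set g : G := h⁻¹ * h' with hgdef
    have hgH : g ∈ H := mul_mem (inv_mem hh) hh'
    have hgXY : g ∈ Subgroup.closure (X ∪ Y) := by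
      have : g ∈ Subgroup.closure X := by rw [hXgen]; exact hgH
      exact Subgroup.closure_mono Set.subset_union_left this
    obtain ⟨l, hlen, hlX, hlprod⟩ := exists_min_word hgXY
    obtain ⟨y, hyY, hyH, hylen⟩ := key l hlX
    have hy1 : y = 1 := by
      obtain ⟨w, _, hw⟩ := hYtrans 1
      have h1 : y = w := hw y ⟨hyY, by
        have : y ∈ H := by
          have := mul_mem (inv_mem (hlprod ▸ hgH : l.prod ∈ H)) hyH
          simpa [mul_assoc] using this
        simpa using this⟩
      have h2 : (1 : G) = w := hw 1 ⟨h1Y, by simpa using H.one_mem⟩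
      rw [h1, ← h2]
    rw [hy1, hlprod] at hylen
    calc wordDist X h h' = wordLength X g := rfl
      _ = wordLength X (g * 1) := by rw [mul_one]
      _ ≤ C * l.length := hylen
      _ = C * wordDist (X ∪ Y) h h' := by rw [hlen]; rfl
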